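/- arXiv:1209.3927 — 2 statements merged into one kernel-verified Lean document; each statement's English description precedes it below -/
import Mathlib

section
/- (Justin's formula) For all words v, u over {a,b}: ψ(vu) = μ_v(ψ(u)) ψ(v), where μ_v is the composition μ_{x1} ∘ ⋯ ∘ μ_{xn} for v = x1⋯xn. -/
def palClosure (w : List Bool) : List Bool :=
  let k := Nat.find (p := fun k => (w.drop k).reverse = w.drop k)
    ⟨w.length, by simp⟩
  w.take k ++ w.drop k ++ (w.take k).reverse

def psi (v : List Bool) : List Bool := v.foldl (fun w x => palClosure (w ++ [x])) []

def E (v : List Bool) : List Bool := v.map (!·)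

def mu (x : Bool) (w : List Bool) : List Bool := w.flatMap (fun y => if y = x then [x] else [x, y])

def muW : List Bool → List Bool → List Bool
  | [], w => w
  | x :: v, w => mu x (muW v w)

def vN (n : ℕ) : List Bool := (List.range n).map (fun i => decide (i % 2 = 1))

def fibF : ℕ → ℕ
  | 0 => 1
  | 1 => 1
  | n + 2 => fibF (n + 1) + fibF n

def HasPeriod (w : List Bool) (p : ℕ) : Prop :=
  0 < p ∧ ∀ i j (hi : i < w.length) (hj : j < w.length),
    i % p = j % p → w.get ⟨i, hi⟩ = w.get ⟨j, hj⟩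

noncomputable def minPeriod (w : List Bool) : ℕ := sInf {p | HasPeriod w p}

def dOp : List Bool → List Bool
  | x :: y :: u => y :: x :: u
  | w => w

def cOp (v : List Bool) : List Bool := (dOp v.reverse).reverse

def contAux : List ℕ → ℕ
  | [] => 1
  | [a] => a
  | a :: b :: t => a * contAux (b :: t) + contAux t

/-!
Justin's formula follows by induction on `v` from its case `v = x`, `ψ(x u) = μ_x(ψ u) x`, which
in turn follows by induction on `u` from `(μ_x(w) x y)⁺ = μ_x((w y)⁺) x`, `⁺` the palindromic
closure. The closure of `w = p s`, with `s` the longest palindromic suffix of `w`, is `p s p^R`.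
Every suffix of `μ_x(w)` is `μ_x(s)` or `x̄ μ_x(u)` for a suffix `s`, resp. `x̄ u`, of `w` (`x̄`
the other letter), and `μ_x(s) x`, resp. `x̄ μ_x(u)`, is a palindrome iff `s`, resp. `x̄ u`, is.
So the longest palindromic suffix of `μ_x(w) x y` is the image of that of `w y`, and the closures
correspond.
-/

lemma List.exists_eq_append_longest_palindrome_suffix {α : Type*} (w : List α) :
    ∃ p s, w = p ++ s ∧ s.reverse = s ∧ ∀ t, t <:+ w → t.reverse = t → t <:+ s := by
  classical
  have hex : ∃ k, (w.drop k).reverse = w.drop k := ⟨w.length, by simp⟩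
  refine ⟨w.take (Nat.find hex), w.drop (Nat.find hex), (List.take_append_drop _ _).symm,
    Nat.find_spec hex, fun t ht htpal => ?_⟩
  have hlen := ht.length_le
  rw [List.suffix_iff_eq_drop] at ht
  have hk : Nat.find hex ≤ w.length - t.length := Nat.find_min' hex (ht ▸ htpal)
  exact List.suffix_of_suffix_length_le (ht ▸ List.drop_suffix _ _) (List.drop_suffix _ _)
    (by rw [List.length_drop]; omega)

lemma List.reverse_cons_append_singleton_ne {α : Type*} {a b : α} (h : a ≠ b) (l : List α) :
    (a :: l ++ [b]).reverse ≠ a :: l ++ [b] := by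
  simp [h.symm]

lemma palClosure_append_eq {p s : List Bool} (hs : s.reverse = s)
    (hmax : ∀ t, t <:+ p ++ s → t.reverse = t → t <:+ s) :
    palClosure (p ++ s) = p ++ s ++ p.reverse := by
  have hk : Nat.find (p := fun k => ((p ++ s).drop k).reverse = (p ++ s).drop k)
      ⟨(p ++ s).length, by simp⟩ = p.length := by
    rw [Nat.find_eq_iff]
    refine ⟨by simpa using hs, fun j hj hpal => ?_⟩
    have := (hmax _ (List.drop_suffix j _) hpal).length_le
    simp only [List.length_drop, List.length_append] at this
    omega
  unfold palClosure
  simp only [hk, List.take_left', List.drop_left']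

def nu (x : Bool) (w : List Bool) : List Bool := w.flatMap (fun y => if y = x then [x] else [y, x])

section Mu

variable (x : Bool)

@[simp] lemma mu_nil : mu x [] = [] := rfl

@[simp] lemma mu_cons_self (w : List Bool) : mu x (x :: w) = x :: mu x w := by
  simp [mu]

@[simp] lemma mu_cons_not (w : List Bool) : mu x ((!x) :: w) = x :: (!x) :: mu x w := by
  simp [mu]

@[simp] lemma nu_nil : nu x [] = [] := rfl

@[simp] lemma nu_cons_self (w : List Bool) : nu x (x :: w) = x :: nu x w := by
  simp [nu]

@[simp] lemma nu_cons_not (w : List Bool) : nu x ((!x) :: w) = (!x) :: x :: nu x w := by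
  simp [nu]

@[simp] lemma mu_append (u v : List Bool) : mu x (u ++ v) = mu x u ++ mu x v :=
  List.flatMap_append ..

@[simp] lemma nu_append (u v : List Bool) : nu x (u ++ v) = nu x u ++ nu x v :=
  List.flatMap_append ..

lemma mu_append_singleton (w : List Bool) : mu x w ++ [x] = x :: nu x w := by
  induction w with
  | nil => rfl
  | cons a w ih => rcases Bool.eq_or_eq_not a x with h | h <;> subst a <;> simp [ih]

lemma reverse_mu (w : List Bool) : (mu x w).reverse = nu x w.reverse := by
  induction w with
  | nil => rfl
  | cons a w ih => rcases Bool.eq_or_eq_not a x with h | h <;> subst a <;> simp [ih]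

lemma mu_ne_not_cons (w t : List Bool) : mu x w ≠ (!x) :: t := by
  cases w with
  | nil => simp
  | cons a w => rcases Bool.eq_or_eq_not a x with h | h <;> subst a <;> simp

lemma mu_injective : Function.Injective (mu x) := by
  intro u
  induction u with
  | nil =>
    rintro (_ | ⟨b, v⟩) h
    · rfl
    · rcases Bool.eq_or_eq_not b x with hb | hb <;> subst b <;> simp at h
  | cons a u ih =>
    rintro (_ | ⟨b, v⟩) h
    · rcases Bool.eq_or_eq_not a x with ha | ha <;> subst a <;> simp at h
    · rcases Bool.eq_or_eq_not a x with ha | ha <;> rcases Bool.eq_or_eq_not b x with hb | hb <;>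
        subst a b <;> simp [mu_ne_not_cons, (mu_ne_not_cons _ _ _).symm] at h ⊢ <;> exact ih h

lemma nu_injective : Function.Injective (nu x) := by
  have h : nu x = List.reverse ∘ mu x ∘ List.reverse := funext fun w => by simp [reverse_mu]
  rw [h]
  exact List.reverse_injective.comp ((mu_injective x).comp List.reverse_injective)

lemma mu_suffix_mu {u v : List Bool} (h : u <:+ v) : mu x u <:+ mu x v := by
  obtain ⟨r, rfl⟩ := h
  exact ⟨mu x r, (mu_append x r u).symm⟩

lemma reverse_mu_append_singleton (u : List Bool) :
    (mu x u ++ [x]).reverse = mu x u.reverse ++ [x] := by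
  rw [List.reverse_append, reverse_mu, mu_append_singleton]
  rfl

lemma reverse_mu_append_singleton_eq_self_iff (u : List Bool) :
    (mu x u ++ [x]).reverse = mu x u ++ [x] ↔ u.reverse = u := by
  rw [reverse_mu_append_singleton, List.append_left_inj, (mu_injective x).eq_iff]

lemma reverse_not_cons_mu_eq_self_iff (u : List Bool) :
    ((!x) :: mu x u).reverse = (!x) :: mu x u ↔ ((!x) :: u).reverse = (!x) :: u := by
  have hl : ((!x) :: mu x u).reverse ++ [x] = nu x ((!x) :: u).reverse := by simp [reverse_mu]
  have hr : (!x) :: mu x u ++ [x] = nu x ((!x) :: u) := by simp [mu_append_singleton]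
  rw [← List.append_left_inj [x], hl, hr, (nu_injective x).eq_iff]

lemma exists_of_suffix_mu {t w : List Bool} (h : t <:+ mu x w) :
    (∃ s, s <:+ w ∧ t = mu x s) ∨ ∃ u, (!x) :: u <:+ w ∧ t = (!x) :: mu x u := by
  induction w generalizing t with
  | nil => exact Or.inl ⟨[], List.nil_suffix, by simpa using h⟩
  | cons a w ih =>
    by_cases ht : t <:+ mu x w
    · have hw := List.suffix_cons a w
      exact (ih ht).imp (fun ⟨s, hs, h⟩ => ⟨s, hs.trans hw, h⟩)
        fun ⟨u, hu, h⟩ => ⟨u, hu.trans hw, h⟩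
    rcases Bool.eq_or_eq_not a x with ha | ha <;> subst a
    · simp only [mu_cons_self, List.suffix_cons_iff, ht, or_false] at h
      exact Or.inl ⟨_, List.suffix_rfl, h.trans (mu_cons_self x w).symm⟩
    · simp only [mu_cons_not, List.suffix_cons_iff, ht, or_false] at h
      rcases h with h | h
      · exact Or.inl ⟨_, List.suffix_rfl, h.trans (mu_cons_not x w).symm⟩
      · exact Or.inr ⟨w, List.suffix_rfl, h⟩

lemma palClosure_mu_append_singleton (w : List Bool) :
    palClosure (mu x w ++ [x]) = mu x (palClosure w) ++ [x] := by
  obtain ⟨p, s, rfl, hs, hmax⟩ := w.exists_eq_append_longest_palindrome_suffix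
  have hW : mu x (p ++ s) ++ [x] = mu x p ++ (mu x s ++ [x]) := by simp
  rw [palClosure_append_eq hs hmax, hW,
    palClosure_append_eq ((reverse_mu_append_singleton_eq_self_iff x s).2 hs) ?_]
  · rw [reverse_mu, List.append_assoc, List.append_assoc, List.singleton_append,
      ← mu_append_singleton]
    simp
  intro t ht htpal
  rw [← hW, List.suffix_concat_iff] at ht
  rcases ht with rfl | ⟨t, rfl, ht⟩
  · exact List.nil_suffix
  rcases exists_of_suffix_mu x ht with ⟨s', hs', rfl⟩ | ⟨u, -, rfl⟩
  · have := hmax s' hs' ((reverse_mu_append_singleton_eq_self_iff x s').1 htpal)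
    exact List.suffix_append_self_iff.2 (mu_suffix_mu x this)
  · exact absurd htpal (List.reverse_cons_append_singleton_ne (Bool.not_ne_self x) _)

lemma palClosure_mu_append_not (w : List Bool) :
    palClosure (mu x (w ++ [!x])) = mu x (palClosure (w ++ [!x])) ++ [x] := by
  obtain ⟨p, s, hw, hs, hmax⟩ := (w ++ [!x]).exists_eq_append_longest_palindrome_suffix
  -- `[!x]` is a palindromic suffix, so `s` ends, hence begins, with `!x`
  obtain ⟨u, rfl⟩ : ∃ u, s = (!x) :: u := by
    obtain ⟨r, hr⟩ := hmax [!x] (List.suffix_append _ _) rfl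
    exact ⟨r.reverse, by rw [← hs, ← hr]; simp⟩
  have hW : mu x (p ++ (!x) :: u) = (mu x p ++ [x]) ++ (!x) :: mu x u := by simp
  rw [hw, palClosure_append_eq hs (hw ▸ hmax), hW,
    palClosure_append_eq ((reverse_not_cons_mu_eq_self_iff x u).2 hs) ?_]
  · rw [reverse_mu_append_singleton, ← hW]
    simp
  intro t ht htpal
  have ht' : t <:+ mu x (w ++ [!x]) := by rwa [hw, hW]
  rcases exists_of_suffix_mu x ht' with ⟨s', hs', rfl⟩ | ⟨u', hu', rfl⟩
  · rcases List.suffix_concat_iff.1 hs' with rfl | ⟨r, rfl, -⟩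
    · exact List.nil_suffix
    · rw [mu_append, mu_cons_not, mu_nil, ← List.singleton_append, ← List.append_assoc,
        mu_append_singleton] at htpal
      exact absurd htpal (List.reverse_cons_append_singleton_ne (Bool.not_ne_self x).symm _)
  · have hsuf := hmax _ hu' ((reverse_not_cons_mu_eq_self_iff x u').1 htpal)
    have hlen := (mu_suffix_mu x hsuf).length_le
    simp only [mu_cons_not, List.length_cons] at hlen
    exact List.suffix_of_suffix_length_le ht (List.suffix_append _ _) (by simp; omega)

lemma palClosure_mu_append_pair (y : Bool) (w : List Bool) :
    palClosure (mu x w ++ [x, y]) = mu x (palClosure (w ++ [y])) ++ [x] := by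
  rcases Bool.eq_or_eq_not y x with hy | hy <;> subst y
  · simpa using palClosure_mu_append_singleton x (w ++ [x])
  · simpa using palClosure_mu_append_not x w

lemma psi_append_singleton (v : List Bool) (y : Bool) :
    psi (v ++ [y]) = palClosure (psi v ++ [y]) := by
  simp [psi, List.foldl_append]

lemma psi_cons (x : Bool) (v : List Bool) : psi (x :: v) = mu x (psi v) ++ [x] := by
  induction v using List.reverseRecOn with
  | nil => exact palClosure_append_eq (p := []) rfl fun _ ht _ => ht
  | append_singleton v y ih =>
    rw [← List.cons_append, psi_append_singleton, ih, psi_append_singleton, List.append_assoc]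
    exact palClosure_mu_append_pair x y (psi v)

theorem stmt6 (v u : List Bool) : psi (v ++ u) = muW v (psi u) ++ psi v := by
  induction v with
  | nil => simp [psi, muW]
  | cons x v ih =>
    rw [List.cons_append, psi_cons, ih, psi_cons, mu_append, List.append_assoc]
    rfl
end Mu
end

section
/- Let v^(n) denote the prefix of length n of the infinite word (ab)^ω. For every n ≥ 0, |ψ(v^(n))| = F_{n+1} − 2, where (F_n) is the Fibonacci sequence with F_{−1} = F_0 = 1 and F_{n+1} = F_n + F_{n−1}. -/
/-! The words `ψ(v⁽ⁿ⁾)` are palindromes, and `ψ(v⁽ⁿ⁺¹⁾)` is the palindromic closure of `ψ(v⁽ⁿ⁾) xₙ`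
with `xₙ` the `n`-th letter of `(ab)^ω`. The longest palindromic suffix of `ψ(v⁽ⁿ⁺²⁾) xₙ₊₂` is
`xₙ ψ(v⁽ⁿ⁾) xₙ`: any longer palindromic suffix of a word `P x` with `P` a palindrome would give
`P x` a period shorter than `F_{n+3}`. Excluding such periods is the heart of the induction: a
period below `F_{n+2}` restricts to a shorter word, the period `F_{n+2}` is broken by the two
letters `xₙ₊₁ ≠ xₙ₊₂`, and a period strictly between combines with the period `F_{n+2}` of
`ψ(v⁽ⁿ⁺²⁾)` to give `ψ(v⁽ⁿ⁺¹⁾)` a period below `F_{n+1}`. So each closure step appends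
`F_{n+3} - 1` letters, whence `|ψ(v⁽ⁿ⁾)| + 2` satisfies the Fibonacci recursion. -/

section Periods

variable {α : Type*}

def IsPeriod (p : ℕ) (w : List α) : Prop := ∀ i, i + p < w.length → w[i]? = w[i + p]?

def NoShortPeriod (w : List α) (m : ℕ) : Prop := ∀ p, 0 < p → p < m → ¬ IsPeriod p w

theorem List.IsPrefix.getElem?_eq {u w : List α} (h : u <+: w) {i : ℕ} (hi : i < u.length) :
    w[i]? = u[i]? := by
  obtain ⟨r, rfl⟩ := h
  exact List.getElem?_append_left hi

theorem getElem?_eq_of_reverse_eq {w : List α} (h : w.reverse = w) {i : ℕ} (hi : i < w.length) :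
    w[i]? = w[w.length - 1 - i]? := by
  nth_rewrite 1 [← h]
  exact List.getElem?_reverse hi

theorem IsPeriod.of_prefix {u w : List α} {p : ℕ} (hp : IsPeriod p w) (h : u <+: w) :
    IsPeriod p u := by
  intro i hi
  have := h.length_le
  rw [← h.getElem?_eq (i := i) (by omega), ← h.getElem?_eq hi]
  exact hp i (by omega)

theorem NoShortPeriod.of_prefix {u w : List α} {m : ℕ} (h : NoShortPeriod u m) (hu : u <+: w) :
    NoShortPeriod w m :=
  fun p hp hpm hper => h p hp hpm (hper.of_prefix hu)

theorem IsPeriod.sub_of_prefix {u w : List α} {p q : ℕ} (hp : IsPeriod p w) (hq : IsPeriod q w)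
    (hqp : q ≤ p) (hu : u <+: w) (hlen : u.length + q ≤ w.length) : IsPeriod (p - q) u := by
  intro i hi
  calc u[i]? = w[i]? := (hu.getElem?_eq (by omega)).symm
    _ = w[i + p]? := hp i (by omega)
    _ = w[i + (p - q)]? := by
      rw [hq (i + (p - q)) (by omega), show i + (p - q) + q = i + p by omega]
    _ = u[i + (p - q)]? := hu.getElem?_eq hi

theorem isPeriod_of_palindrome_prefix {t q : List α} (ht : t.reverse = t) (hq : q <+: t)
    (hqpal : q.reverse = q) : IsPeriod (t.length - q.length) t := by
  intro i hi
  have := hq.length_le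
  have hi' : i < q.length := by omega
  rw [getElem?_eq_of_reverse_eq ht (i := i + (t.length - q.length)) (by omega),
    show t.length - 1 - (i + (t.length - q.length)) = q.length - 1 - i by omega,
    hq.getElem?_eq hi', hq.getElem?_eq (by omega)]
  exact getElem?_eq_of_reverse_eq hqpal hi'

theorem isPeriod_of_palindrome_drop {P : List α} {x : α} {j : ℕ} (hP : P.reverse = P)
    (hs : ((P ++ [x]).drop j).reverse = (P ++ [x]).drop j) : IsPeriod (j + 1) (P ++ [x]) := by
  intro i hi
  simp only [List.length_append, List.length_singleton] at hi
  have hpre : P <+: P ++ [x] := List.prefix_append _ _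
  have key := getElem?_eq_of_reverse_eq hs (i := i + 1)
    (by simp only [List.length_drop, List.length_append, List.length_singleton]; omega)
  simp only [List.getElem?_drop, List.length_drop, List.length_append,
    List.length_singleton] at key
  rw [show j + (i + 1) = i + (j + 1) by omega,
    show j + (P.length + 1 - j - 1 - (i + 1)) = P.length - 1 - i by omega] at key
  rw [key, hpre.getElem?_eq (by omega), hpre.getElem?_eq (by omega)]
  exact getElem?_eq_of_reverse_eq hP (by omega)

theorem drop_eq_reverse_of_prefix {t u : List α} (ht : t.reverse = t) (hu : u <+: t) :
    t.drop (t.length - u.length) = u.reverse := by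
  obtain ⟨r, rfl⟩ := hu
  have h : u ++ r = r.reverse ++ u.reverse := by rw [← List.reverse_append, ht]
  rw [show (u ++ r).length - u.length = r.reverse.length by simp]
  nth_rewrite 1 [h]
  exact List.drop_left

end Periods

section PalindromicClosure

theorem palClosure_reverse (w : List Bool) : (palClosure w).reverse = palClosure w := by
  have h := Nat.find_spec (p := fun k => (w.drop k).reverse = w.drop k) ⟨w.length, by simp⟩
  simp only [palClosure, List.reverse_append, List.reverse_reverse, h, List.append_assoc]

theorem prefix_palClosure (w : List Bool) : w <+: palClosure w := by
  simp only [palClosure, List.take_append_drop]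
  exact List.prefix_append _ _

/-- A palindromic suffix `(P x).drop j` with `j < k` would give `P x` the period `j + 1`. -/
theorem palClosure_append_singleton_of_noShortPeriod {P : List Bool} {x : Bool} {k : ℕ}
    (hP : P.reverse = P) (hk : ((P ++ [x]).drop k).reverse = (P ++ [x]).drop k)
    (hno : NoShortPeriod (P ++ [x]) (k + 1)) :
    palClosure (P ++ [x]) = P ++ [x] ++ ((P ++ [x]).take k).reverse := by
  have hfind : Nat.find (p := fun k => ((P ++ [x]).drop k).reverse = (P ++ [x]).drop k)
      ⟨(P ++ [x]).length, by simp⟩ = k :=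
    (Nat.find_eq_iff _).2 ⟨hk, fun j hj hpal =>
      hno (j + 1) j.succ_pos (by omega) (isPeriod_of_palindrome_drop hP hpal)⟩
  simp only [palClosure, hfind, List.take_append_drop]

end PalindromicClosure

theorem fibF_pos : ∀ n, 0 < fibF n
  | 0 | 1 => one_pos
  | n + 2 => Nat.add_pos_left (fibF_pos (n + 1)) _

namespace AlternatingPsi

def letter (n : ℕ) : Bool := decide (n % 2 = 1)

def pal (n : ℕ) : List Bool := psi (vN n)

def palSnoc (n : ℕ) : List Bool := pal n ++ [letter n]

theorem pal_succ (n : ℕ) : pal (n + 1) = palClosure (palSnoc n) := by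
  simp only [pal, palSnoc, letter, psi, vN, List.range_succ, List.map_append, List.foldl_append]
  rfl

theorem pal_reverse : ∀ n, (pal n).reverse = pal n
  | 0 => rfl
  | n + 1 => by rw [pal_succ]; exact palClosure_reverse _

theorem palSnoc_prefix_pal_succ (n : ℕ) : palSnoc n <+: pal (n + 1) :=
  pal_succ n ▸ prefix_palClosure _

theorem pal_prefix_palSnoc (n : ℕ) : pal n <+: palSnoc n := List.prefix_append _ _

theorem letter_add_two (n : ℕ) : letter (n + 2) = letter n := by
  simp only [letter, decide_eq_decide]
  omega

theorem letter_succ_ne_letter_add_two (n : ℕ) : letter (n + 1) ≠ letter (n + 2) := by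
  simp only [letter, ne_eq, decide_eq_decide]
  omega

theorem length_palSnoc (n : ℕ) : (palSnoc n).length = (pal n).length + 1 := by
  simp [palSnoc]

structure Invariant (n : ℕ) : Prop where
  length_pal : (pal n).length + 2 = fibF (n + 2)
  noShortPeriod : NoShortPeriod (palSnoc n) (fibF (n + 1))
  palindrome_drop :
    ((palSnoc n).drop (fibF (n + 1) - 1)).reverse = (palSnoc n).drop (fibF (n + 1) - 1)

theorem Invariant.pal_succ_eq {n : ℕ} (h : Invariant n) :
    pal (n + 1) = palSnoc n ++ ((palSnoc n).take (fibF (n + 1) - 1)).reverse := by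
  rw [pal_succ, palSnoc,
    palClosure_append_singleton_of_noShortPeriod (pal_reverse n) h.palindrome_drop]
  rw [Nat.sub_add_cancel (fibF_pos _)]
  exact h.noShortPeriod

theorem Invariant.length_pal_succ {n : ℕ} (h : Invariant n) :
    (pal (n + 1)).length + 2 = fibF (n + 3) := by
  have := fibF_pos (n + 1)
  have e₂ : fibF (n + 2) = fibF (n + 1) + fibF n := rfl
  have e₃ : fibF (n + 3) = fibF (n + 2) + fibF (n + 1) := rfl
  rw [h.pal_succ_eq, List.length_append, List.length_reverse, List.length_take, length_palSnoc]
  have := h.length_pal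
  omega

theorem isPeriod_fibF_pal {n : ℕ} (h₁ : (pal (n + 1)).length + 2 = fibF (n + 3))
    (h₂ : (pal (n + 2)).length + 2 = fibF (n + 4)) : IsPeriod (fibF (n + 2)) (pal (n + 2)) := by
  have hpre : pal (n + 1) <+: pal (n + 2) :=
    (pal_prefix_palSnoc _).trans (palSnoc_prefix_pal_succ _)
  have h := isPeriod_of_palindrome_prefix (pal_reverse _) hpre (pal_reverse _)
  have e₄ : fibF (n + 4) = fibF (n + 3) + fibF (n + 2) := rfl
  rwa [show (pal (n + 2)).length - (pal (n + 1)).length = fibF (n + 2) by omega] at h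

theorem not_isPeriod_fibF_palSnoc {n : ℕ} (h₁ : (pal (n + 1)).length + 2 = fibF (n + 3))
    (h₂ : (pal (n + 2)).length + 2 = fibF (n + 4)) :
    ¬ IsPeriod (fibF (n + 2)) (palSnoc (n + 2)) := by
  intro hper
  have e₄ : fibF (n + 4) = fibF (n + 3) + fibF (n + 2) := rfl
  have hpre : palSnoc (n + 1) <+: palSnoc (n + 2) :=
    (palSnoc_prefix_pal_succ _).trans (pal_prefix_palSnoc _)
  have hmatch := hper (pal (n + 1)).length (by rw [length_palSnoc]; omega)
  rw [show (pal (n + 1)).length + fibF (n + 2) = (pal (n + 2)).length by omega,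
    hpre.getElem?_eq (by rw [length_palSnoc]; omega)] at hmatch
  simp only [palSnoc, List.getElem?_concat_length, Option.some_inj] at hmatch
  exact letter_succ_ne_letter_add_two n hmatch

theorem noShortPeriod_palSnoc_add_two {n : ℕ} (I₀ : Invariant n) (I₁ : Invariant (n + 1))
    (h₂ : (pal (n + 2)).length + 2 = fibF (n + 4)) :
    NoShortPeriod (palSnoc (n + 2)) (fibF (n + 3)) := by
  have h₁ : (pal (n + 1)).length + 2 = fibF (n + 3) := I₁.length_pal
  have e₃ : fibF (n + 3) = fibF (n + 2) + fibF (n + 1) := rfl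
  have e₄ : fibF (n + 4) = fibF (n + 3) + fibF (n + 2) := rfl
  intro p hp hpn hper
  rcases lt_trichotomy p (fibF (n + 2)) with hlt | rfl | hgt
  · exact I₁.noShortPeriod p hp hlt
      (hper.of_prefix ((palSnoc_prefix_pal_succ _).trans (pal_prefix_palSnoc _)))
  · exact not_isPeriod_fibF_palSnoc h₁ h₂ hper
  · have hsub := (hper.of_prefix (pal_prefix_palSnoc _)).sub_of_prefix
      (isPeriod_fibF_pal h₁ h₂) hgt.le
      ((pal_prefix_palSnoc _).trans (palSnoc_prefix_pal_succ _)) (by omega)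
    exact (I₀.noShortPeriod.of_prefix (palSnoc_prefix_pal_succ n)) _ (by omega) (by omega) hsub

theorem palindrome_drop_palSnoc_add_two {n : ℕ} (h₀ : (pal n).length + 2 = fibF (n + 2))
    (h₂ : (pal (n + 2)).length + 2 = fibF (n + 4)) :
    ((palSnoc (n + 2)).drop (fibF (n + 3) - 1)).reverse =
      (palSnoc (n + 2)).drop (fibF (n + 3) - 1) := by
  have e₄ : fibF (n + 4) = fibF (n + 3) + fibF (n + 2) := rfl
  have hpre : palSnoc n <+: pal (n + 2) :=
    (palSnoc_prefix_pal_succ _).trans ((pal_prefix_palSnoc _).trans (palSnoc_prefix_pal_succ _))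
  have hdrop := drop_eq_reverse_of_prefix (pal_reverse _) hpre
  rw [length_palSnoc, show (pal (n + 2)).length - ((pal n).length + 1) = fibF (n + 3) - 1 by
    omega] at hdrop
  rw [palSnoc, List.drop_append_of_le_length (by omega), hdrop, palSnoc, letter_add_two]
  simp [pal_reverse]

theorem Invariant.add_two {n : ℕ} (I₀ : Invariant n) (I₁ : Invariant (n + 1)) :
    Invariant (n + 2) :=
  have h₂ := I₁.length_pal_succ
  ⟨h₂, noShortPeriod_palSnoc_add_two I₀ I₁ h₂, palindrome_drop_palSnoc_add_two I₀.length_pal h₂⟩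

theorem invariant_zero : Invariant 0 :=
  ⟨rfl, fun p hp hp' => absurd hp' (by simp [fibF]; omega), by decide⟩

theorem pal_one : pal 1 = [false] := by
  rw [invariant_zero.pal_succ_eq]
  rfl

theorem invariant_one : Invariant 1 := by
  refine ⟨by rw [pal_one]; rfl, ?_, by rw [palSnoc, pal_one]; decide⟩
  intro p hp hp' hper
  obtain rfl : p = 1 := by simp [fibF] at hp'; omega
  simpa [palSnoc, pal_one, letter] using hper 0

theorem invariant : ∀ n, Invariant n :=
  Nat.twoStepInduction invariant_zero invariant_one fun _ => Invariant.add_two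

end AlternatingPsi

theorem stmt9 (n : ℕ) : (psi (vN n)).length = fibF (n + 2) - 2 := by
  have := (AlternatingPsi.invariant n).length_pal
  rw [AlternatingPsi.pal] at this
  omega
end
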